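/- Let d ≥ 1, let n ≤ m, let U be an m×m complex unitary matrix, and let λ_1, …, λ_n be nonnegative reals with λ_1 ≥ λ_k for all k. Then ∑_{l=1}^{m} | ∑_{k=1}^{n} (U_{lk})^d λ_k |^{2/d} ≥ λ_1^{2/d} − ∑_{k=2}^{n} λ_k^{2/d}. -/

import Mathlib

open scoped BigOperators Matrix

/-!
Write `p = 2/d` and `z_{lk} = U_{lk}^d λ_k`. For `d ≥ 2` we have `p ≤ 1`, so `t ↦ t^p` is
subadditive, and the triangle inequality `|z_{l1}| ≤ |∑_k z_{lk}| + ∑_{k≥2} |z_{lk}|` gives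
`|z_{l1}|^p ≤ |∑_k z_{lk}|^p + ∑_{k≥2} |z_{lk}|^p` in every row `l`. Since
`|z_{lk}|^p = |U_{lk}|^2 λ_k^p` and the columns of `U` are unit vectors, summing over `l` turns
each `∑_l |z_{lk}|^p` into `λ_k^p`. For `d = 1` no subadditivity is needed: the sum over `l`
is `‖U λ‖² = ∑_k λ_k²` since `U` is an isometry.
-/

open Finset

theorem Real.rpow_sum_le_sum_rpow {ι : Type*} (s : Finset ι) {f : ι → ℝ}
    (hf : ∀ i ∈ s, 0 ≤ f i) {p : ℝ} (hp : 0 < p) (hp1 : p ≤ 1) :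
    (∑ i ∈ s, f i) ^ p ≤ ∑ i ∈ s, f i ^ p := by
  induction s using Finset.cons_induction with
  | empty => simp [Real.zero_rpow hp.ne']
  | cons a s _ ih =>
    simp only [forall_mem_cons] at hf
    rw [sum_cons, sum_cons]
    calc (f a + ∑ i ∈ s, f i) ^ p ≤ f a ^ p + (∑ i ∈ s, f i) ^ p :=
          Real.rpow_add_le_add_rpow hf.1 (sum_nonneg hf.2) hp.le hp1
      _ ≤ f a ^ p + ∑ i ∈ s, f i ^ p := by gcongr; exact ih hf.2

theorem norm_rpow_le_norm_sum_rpow_add_sum_erase_rpow {ι E : Type*} [SeminormedAddCommGroup E]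
    [DecidableEq ι] {s : Finset ι} {i : ι} (hi : i ∈ s) (z : ι → E) {p : ℝ} (hp : 0 < p)
    (hp1 : p ≤ 1) :
    ‖z i‖ ^ p ≤ ‖∑ j ∈ s, z j‖ ^ p + ∑ j ∈ s.erase i, ‖z j‖ ^ p := by
  have htriangle : ‖z i‖ ≤ ‖∑ j ∈ s, z j‖ + ∑ j ∈ s.erase i, ‖z j‖ := by
    rw [← add_sum_erase s z hi]
    calc ‖z i‖ = ‖(z i + ∑ j ∈ s.erase i, z j) - ∑ j ∈ s.erase i, z j‖ := by
          rw [add_sub_cancel_right]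
      _ ≤ ‖z i + ∑ j ∈ s.erase i, z j‖ + ‖∑ j ∈ s.erase i, z j‖ := norm_sub_le _ _
      _ ≤ ‖z i + ∑ j ∈ s.erase i, z j‖ + ∑ j ∈ s.erase i, ‖z j‖ := by
          gcongr; exact norm_sum_le _ _
  have hnonneg : 0 ≤ ∑ j ∈ s.erase i, ‖z j‖ := sum_nonneg fun _ _ => norm_nonneg _
  calc ‖z i‖ ^ p ≤ (‖∑ j ∈ s, z j‖ + ∑ j ∈ s.erase i, ‖z j‖) ^ p :=
        Real.rpow_le_rpow (norm_nonneg _) htriangle hp.le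
    _ ≤ ‖∑ j ∈ s, z j‖ ^ p + (∑ j ∈ s.erase i, ‖z j‖) ^ p :=
        Real.rpow_add_le_add_rpow (norm_nonneg _) hnonneg hp.le hp1
    _ ≤ ‖∑ j ∈ s, z j‖ ^ p + ∑ j ∈ s.erase i, ‖z j‖ ^ p := by
        gcongr
        exact Real.rpow_sum_le_sum_rpow _ (fun _ _ => norm_nonneg _) hp hp1

namespace Matrix

theorem conjTranspose_mul_self_submatrix_of_mem_unitaryGroup {ι κ α : Type*} [Fintype ι]
    [DecidableEq ι] [DecidableEq κ] [CommRing α] [StarRing α] {U : Matrix ι ι α}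
    (hU : U ∈ unitaryGroup ι α) {e : κ → ι} (he : Function.Injective e) :
    (U.submatrix id e)ᴴ * U.submatrix id e = 1 := by
  rw [conjTranspose_submatrix, ← submatrix_mul _ _ _ _ _ Function.bijective_id,
    ← star_eq_conjTranspose, mem_unitaryGroup_iff'.mp hU, submatrix_one _ he]

variable {ι κ : Type*} [Fintype ι] [Fintype κ]

theorem star_dotProduct_self_eq_sum_norm_sq (x : ι → ℂ) :
    star x ⬝ᵥ x = ((∑ i, ‖x i‖ ^ 2 : ℝ) : ℂ) := by
  push_cast
  exact sum_congr rfl fun i _ => Complex.conj_mul' (x i)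

variable [DecidableEq κ]

theorem sum_norm_sq_mulVec_of_conjTranspose_mul_self {V : Matrix ι κ ℂ}
    (hV : Vᴴ * V = 1) (v : κ → ℂ) :
    ∑ i, ‖(V *ᵥ v) i‖ ^ 2 = ∑ k, ‖v k‖ ^ 2 := by
  have h : star (V *ᵥ v) ⬝ᵥ (V *ᵥ v) = star v ⬝ᵥ v := by
    rw [star_mulVec, ← dotProduct_mulVec, mulVec_mulVec, hV, one_mulVec]
  rw [star_dotProduct_self_eq_sum_norm_sq, star_dotProduct_self_eq_sum_norm_sq] at h
  exact_mod_cast h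

theorem sum_norm_sq_col_of_conjTranspose_mul_self {V : Matrix ι κ ℂ}
    (hV : Vᴴ * V = 1) (k : κ) :
    ∑ i, ‖V i k‖ ^ 2 = 1 := by
  simpa [mulVec_single_one, Pi.single_apply, apply_ite] using
    sum_norm_sq_mulVec_of_conjTranspose_mul_self hV (Pi.single k 1)

theorem sq_sub_sum_erase_sq_le_sum_norm_sq {V : Matrix ι κ ℂ} (hV : Vᴴ * V = 1)
    (lam : κ → ℝ) (k₀ : κ) :
    lam k₀ ^ 2 - ∑ k ∈ univ.erase k₀, lam k ^ 2 ≤ ∑ i, ‖∑ k, V i k * (lam k : ℂ)‖ ^ 2 := by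
  have hparseval := sum_norm_sq_mulVec_of_conjTranspose_mul_self hV (fun k => (lam k : ℂ))
  simp only [Complex.norm_real, Real.norm_eq_abs, sq_abs, mulVec, dotProduct] at hparseval
  rw [hparseval, ← add_sum_erase _ _ (mem_univ k₀)]
  linarith [sum_nonneg fun k (_ : k ∈ univ.erase k₀) => sq_nonneg (lam k)]

theorem sum_norm_pow_mul_rpow_of_conjTranspose_mul_self {V : Matrix ι κ ℂ} (hV : Vᴴ * V = 1)
    {d : ℕ} (hd : d ≠ 0) (k : κ) {x : ℝ} (hx : 0 ≤ x) :
    ∑ i, ‖V i k ^ d * (x : ℂ)‖ ^ ((2 : ℝ) / d) = x ^ ((2 : ℝ) / d) := by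
  have hrow : ∀ i, ‖V i k ^ d * (x : ℂ)‖ ^ ((2 : ℝ) / d) = ‖V i k‖ ^ 2 * x ^ ((2 : ℝ) / d) := by
    intro i
    have hexp : (d : ℝ) * (2 / d) = (2 : ℕ) := by push_cast; field_simp
    rw [norm_mul, norm_pow, Complex.norm_real, Real.norm_of_nonneg hx,
      Real.mul_rpow (by positivity) hx, ← Real.rpow_natCast ‖V i k‖ d,
      ← Real.rpow_mul (norm_nonneg _), hexp, Real.rpow_natCast]
  simp only [hrow, ← sum_mul, sum_norm_sq_col_of_conjTranspose_mul_self hV, one_mul]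

theorem rpow_sub_sum_erase_rpow_le_of_two_le {V : Matrix ι κ ℂ} (hV : Vᴴ * V = 1)
    {d : ℕ} (hd : 2 ≤ d) (lam : κ → ℝ) (hlam : ∀ k, 0 ≤ lam k) (k₀ : κ) :
    lam k₀ ^ ((2 : ℝ) / d) - ∑ k ∈ univ.erase k₀, lam k ^ ((2 : ℝ) / d)
      ≤ ∑ i, ‖∑ k, V i k ^ d * (lam k : ℂ)‖ ^ ((2 : ℝ) / d) := by
  have hd0 : d ≠ 0 := by omega
  have hp : 0 < (2 : ℝ) / d := by positivity
  have hp1 : (2 : ℝ) / d ≤ 1 := by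
    rw [div_le_one (by positivity)]; exact_mod_cast hd
  have hcol := fun k => sum_norm_pow_mul_rpow_of_conjTranspose_mul_self hV hd0 k (hlam k)
  have hrows := fun i => norm_rpow_le_norm_sum_rpow_add_sum_erase_rpow (mem_univ k₀)
    (fun k => V i k ^ d * (lam k : ℂ)) hp hp1
  calc lam k₀ ^ ((2 : ℝ) / d) - ∑ k ∈ univ.erase k₀, lam k ^ ((2 : ℝ) / d)
      = ∑ i, ‖V i k₀ ^ d * (lam k₀ : ℂ)‖ ^ ((2 : ℝ) / d)
          - ∑ i, ∑ k ∈ univ.erase k₀, ‖V i k ^ d * (lam k : ℂ)‖ ^ ((2 : ℝ) / d) := by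
        rw [hcol, sum_comm]; simp only [hcol]
    _ ≤ _ := by
        rw [sub_le_iff_le_add, ← sum_add_distrib]
        exact sum_le_sum fun i _ => hrows i

end Matrix

theorem sum_abs_rpow_ge_of_unitary_general
    (d m n : ℕ) (hd : 1 ≤ d) (hn : 0 < n) (hnm : n ≤ m)
    (U : Matrix (Fin m) (Fin m) ℂ) (hU : U ∈ Matrix.unitaryGroup (Fin m) ℂ)
    (lam : Fin n → ℝ) (hlam : ∀ k, 0 ≤ lam k) :
    lam ⟨0, hn⟩ ^ ((2 : ℝ) / d)
        - ∑ k ∈ Finset.univ.erase ⟨0, hn⟩, lam k ^ ((2 : ℝ) / d)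
      ≤ ∑ l : Fin m,
          ‖∑ k : Fin n, (U l (Fin.castLE hnm k)) ^ d * (lam k : ℂ)‖
            ^ ((2 : ℝ) / d) := by
  have hV :=
    Matrix.conjTranspose_mul_self_submatrix_of_mem_unitaryGroup hU (Fin.castLE_injective hnm)
  rcases hd.eq_or_lt with rfl | hd
  · simpa [Real.rpow_two] using Matrix.sq_sub_sum_erase_sq_le_sum_norm_sq hV lam ⟨0, hn⟩
  · exact Matrix.rpow_sub_sum_erase_rpow_le_of_two_le hV hd lam hlam ⟨0, hn⟩

/-- **Lower bound of Theorem 7.** For an `m × m` unitary `U`, `n ≤ m`, and nonnegative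
reals `λ₁, …, λ_n` with `λ₁` the largest,
`∑_l |∑_k (U_{lk})^d λ_k|^{2/d} ≥ λ₁^{2/d} − ∑_{k≥2} λ_k^{2/d}`. -/
theorem sum_abs_rpow_ge_of_unitary
    (d m n : ℕ) (hd : 1 ≤ d) (hn : 0 < n) (hnm : n ≤ m)
    (U : Matrix (Fin m) (Fin m) ℂ) (hU : U ∈ Matrix.unitaryGroup (Fin m) ℂ)
    (lam : Fin n → ℝ) (hlam : ∀ k, 0 ≤ lam k)
    (hmax : ∀ k, lam k ≤ lam ⟨0, hn⟩) :
    lam ⟨0, hn⟩ ^ ((2 : ℝ) / d)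
        - ∑ k ∈ Finset.univ.erase ⟨0, hn⟩, lam k ^ ((2 : ℝ) / d)
      ≤ ∑ l : Fin m,
          ‖∑ k : Fin n, (U l (Fin.castLE hnm k)) ^ d * (lam k : ℂ)‖
            ^ ((2 : ℝ) / d) :=
  sum_abs_rpow_ge_of_unitary_general d m n hd hn hnm U hU lam hlam
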